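/- arXiv:2303.03218 — 2 statements merged into one kernel-verified Lean document; each statement's English description precedes it below -/
import Mathlib

section
/- Let b : ℝ^d → ℝ^d be a globally bounded Lipschitz vector field with flow Φ_t. Then for every (t,x) ∈ ℝ × ℝ^d, the directional derivative of the Lipschitz map Φ_t at x in the direction b(x) exists and equals b(Φ_t(x)); that is, lim_{h→0} (Φ_t(x + h·b(x)) − Φ_t(x))/h = b(Φ_t(x)). -/
open Set Filter Topology Asymptotics

/-! By uniqueness of solutions, `Φ t (Φ h x) = Φ (t + h) x`, and the right-hand side has
derivative `b (Φ t x)` at `h = 0`. The curve `h ↦ x + h • b x` is tangent to `h ↦ Φ h x`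
at `h = 0`, i.e. they differ by `o(h)`, and by Gronwall the map `Φ t` is Lipschitz
(with constant `exp (K |t|)`), so it preserves this `o(h)` discrepancy. -/

theorem HasDerivAt.congr_of_isLittleO_sub {𝕜 F : Type*} [NontriviallyNormedField 𝕜]
    [NormedAddCommGroup F] [NormedSpace 𝕜 F] {f g : 𝕜 → F} {f' : F} {a : 𝕜}
    (hf : HasDerivAt f f' a) (hgf : (fun x => g x - f x) =o[𝓝 a] fun x => x - a)
    (ha : g a = f a) : HasDerivAt g f' a := by
  rw [hasDerivAt_iff_isLittleO] at hf ⊢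
  refine (hgf.add hf).congr_left fun x => ?_
  rw [ha]
  abel

theorem LipschitzWith.isLittleO_comp_sub {α E F G : Type*} [SeminormedAddCommGroup E]
    [SeminormedAddCommGroup F] [Norm G] {L : NNReal} {T : E → F} (hT : LipschitzWith L T)
    {l : Filter α} {u w : α → E} {k : α → G} (huw : (fun a => u a - w a) =o[l] k) :
    (fun a => T (u a) - T (w a)) =o[l] k := by
  refine IsBigO.trans_isLittleO (IsBigO.of_bound L (Eventually.of_forall fun a => ?_)) huw
  simpa only [← dist_eq_norm] using hT.dist_le_mul (u a) (w a)

section Flow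

variable {E : Type*} [NormedAddCommGroup E] [NormedSpace ℝ E] {K : NNReal} {b : E → E}
  {Φ : ℝ → E → E}

theorem flow_add (hb : LipschitzWith K b) (hΦ0 : ∀ x, Φ 0 x = x)
    (hΦ : ∀ t x, HasDerivAt (fun s => Φ s x) (b (Φ t x)) t) (t s : ℝ) (x : E) :
    Φ t (Φ s x) = Φ (t + s) x := by
  have hshift : ∀ r, HasDerivAt (fun r => Φ (r + s) x) (b (Φ (r + s) x)) r := fun r =>
    (hΦ (r + s) x).comp_add_const r s
  have := ODE_solution_unique_univ (v := fun _ => b) (s := fun _ => univ) (t₀ := 0)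
    (fun _ => hb.lipschitzOnWith) (fun r => ⟨hΦ r (Φ s x), trivial⟩)
    (fun r => ⟨hshift r, trivial⟩) (by simp only [hΦ0, zero_add])
  exact congrFun this t

theorem dist_flow_le_of_nonneg (hb : LipschitzWith K b) (hΦ0 : ∀ x, Φ 0 x = x)
    (hΦ : ∀ t x, HasDerivAt (fun s => Φ s x) (b (Φ t x)) t) {t : ℝ} (ht : 0 ≤ t) (x y : E) :
    dist (Φ t x) (Φ t y) ≤ dist x y * Real.exp (K * t) := by
  simpa only [sub_zero] using dist_le_of_trajectories_ODE (v := fun _ => b) (fun _ => hb)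
    (fun s _ => (hΦ s x).continuousAt.continuousWithinAt)
    (fun s _ => (hΦ s x).hasDerivWithinAt)
    (fun s _ => (hΦ s y).continuousAt.continuousWithinAt)
    (fun s _ => (hΦ s y).hasDerivWithinAt)
    (by rw [hΦ0, hΦ0]) t ⟨ht, le_rfl⟩

theorem dist_flow_le (hb : LipschitzWith K b) (hΦ0 : ∀ x, Φ 0 x = x)
    (hΦ : ∀ t x, HasDerivAt (fun s => Φ s x) (b (Φ t x)) t) (t : ℝ) (x y : E) :
    dist (Φ t x) (Φ t y) ≤ dist x y * Real.exp (K * |t|) := by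
  rcases le_or_gt 0 t with ht | ht
  · rw [abs_of_nonneg ht]
    exact dist_flow_le_of_nonneg hb hΦ0 hΦ ht x y
  · -- `s ↦ Φ (-s)` is the flow of the `K`-Lipschitz field `-b`
    have hrev : ∀ s z, HasDerivAt (fun r => Φ (-r) z) (-b (Φ (-s) z)) s := fun s z => by
      simpa only [neg_one_smul, Function.comp_def] using (hΦ (-s) z).scomp s (hasDerivAt_neg s)
    have := dist_flow_le_of_nonneg (Φ := fun s => Φ (-s)) hb.neg (by simpa only [neg_zero])
      hrev (neg_nonneg.2 ht.le) x y
    rwa [neg_neg, ← abs_of_neg ht] at this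

theorem lipschitzWith_flow (hb : LipschitzWith K b) (hΦ0 : ∀ x, Φ 0 x = x)
    (hΦ : ∀ t x, HasDerivAt (fun s => Φ s x) (b (Φ t x)) t) (t : ℝ) :
    LipschitzWith (Real.exp (K * |t|)).toNNReal (Φ t) :=
  LipschitzWith.of_dist_le' fun x y => by
    rw [mul_comm]
    exact dist_flow_le hb hΦ0 hΦ t x y

end Flow

theorem flow_lineDeriv_along_b_general
    {d : ℕ} (b : (Fin d → ℝ) → (Fin d → ℝ)) (Φ : ℝ → (Fin d → ℝ) → (Fin d → ℝ))
    (K : NNReal) (hLip : LipschitzWith K b)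
    (hΦ0 : ∀ x, Φ 0 x = x)
    (hODE : ∀ t x, HasDerivAt (fun s => Φ s x) (b (Φ t x)) t) :
    ∀ (t : ℝ) (x : Fin d → ℝ), HasLineDerivAt ℝ (Φ t) (b (Φ t x)) x (b x) := by
  intro t x
  have hcomp : HasDerivAt (fun h => Φ t (Φ h x)) (b (Φ t x)) 0 := by
    simp only [flow_add hLip hΦ0 hODE]
    simpa only [add_zero] using (hODE (t + 0) x).comp_const_add t 0
  have htangent : (fun h : ℝ => (x + h • b x) - Φ h x) =o[𝓝 0] fun h => h := by
    refine (hasDerivAt_iff_isLittleO_nhds_zero.1 (hΦ0 x ▸ hODE 0 x)).neg_left.congr_left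
      fun h => ?_
    rw [zero_add, hΦ0]
    abel
  refine hcomp.congr_of_isLittleO_sub ?_ (by rw [zero_smul, add_zero, hΦ0])
  simpa only [sub_zero] using (lipschitzWith_flow hLip hΦ0 hODE t).isLittleO_comp_sub htangent

/-- **Directional differentiability of the flow map along the vector field.**
If `b : ℝ^d → ℝ^d` is globally bounded and Lipschitz with flow `Φ`, then for every
`(t, x)` the directional (line) derivative of the Lipschitz map `Φ t` at `x` in the
direction `b x` exists and equals `b (Φ t x)`:
`lim_{h→0} (Φ t (x + h • b x) − Φ t x)/h = b (Φ t x)`. -/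
theorem flow_lineDeriv_along_b
    {d : ℕ} (b : (Fin d → ℝ) → (Fin d → ℝ)) (Φ : ℝ → (Fin d → ℝ) → (Fin d → ℝ))
    (K : NNReal) (hLip : LipschitzWith K b)
    (C : ℝ) (hbound : ∀ x, ‖b x‖ ≤ C)
    (hΦ0 : ∀ x, Φ 0 x = x)
    (hODE : ∀ t x, HasDerivAt (fun s => Φ s x) (b (Φ t x)) t) :
    ∀ (t : ℝ) (x : Fin d → ℝ), HasLineDerivAt ℝ (Φ t) (b (Φ t x)) x (b x) :=
  flow_lineDeriv_along_b_general b Φ K hLip hΦ0 hODE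
end

section
/- Let b be a globally bounded Lipschitz vector field on ℝ^d, fix t ∈ ℝ and let Φ be the flow of b. Then for every x ∈ ℝ^d and h ∈ ℝ, |Φ_t(x + h·b(x)) − Φ_{t+h}(x)| ≤ Lip(Φ_t) · Lip(b) · ‖b‖_∞ · h². -/
/-!
Flowing for time `h` from `x` moves the point by `h • b x` up to an error of order `h²`: the
velocity `b (Φ r x)` differs from `b x` by at most `Lip(b) ‖Φ r x - x‖ ≤ Lip(b) ‖b‖_∞ |r|`.
Writing `Φ (t + h) = Φ t ∘ Φ h` (uniqueness of solutions of the Lipschitz ODE), the estimate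
follows by applying the `Lip(Φ t)`-Lipschitz map `Φ t` to both `x + h • b x` and `Φ h x`.
-/

open Set

section

variable {E : Type*} [NormedAddCommGroup E] [NormedSpace ℝ E] {b : E → E} {Φ : ℝ → E → E}

theorem norm_flow_sub_le {C : ℝ} (hbound : ∀ x, ‖b x‖ ≤ C) (hΦ0 : ∀ x, Φ 0 x = x)
    (hODE : ∀ t x, HasDerivAt (fun s => Φ s x) (b (Φ t x)) t) (s : ℝ) (x : E) :
    ‖Φ s x - x‖ ≤ C * |s| := by
  have := (convex_uIcc (0 : ℝ) s).norm_image_sub_le_of_norm_hasDerivWithin_le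
    (f := fun r => Φ r x) (fun r _ => (hODE r x).hasDerivWithinAt) (fun r _ => hbound _)
    left_mem_uIcc right_mem_uIcc
  simpa [hΦ0, Real.norm_eq_abs] using this

theorem norm_flow_sub_add_smul_le {K : NNReal} (hLip : LipschitzWith K b) {C : ℝ}
    (hbound : ∀ x, ‖b x‖ ≤ C) (hΦ0 : ∀ x, Φ 0 x = x)
    (hODE : ∀ t x, HasDerivAt (fun s => Φ s x) (b (Φ t x)) t) (h : ℝ) (x : E) :
    ‖Φ h x - (x + h • b x)‖ ≤ K * C * h ^ 2 := by
  have hC : 0 ≤ C := (norm_nonneg _).trans (hbound x)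
  have hderiv (r : ℝ) : HasDerivAt (fun r => Φ r x - r • b x) (b (Φ r x) - b x) r := by
    simpa using (hODE r x).fun_sub ((hasDerivAt_id r).smul_const (b x))
  have hvelocity (r : ℝ) (hr : r ∈ uIcc 0 h) : ‖b (Φ r x) - b x‖ ≤ K * C * |h| :=
    calc ‖b (Φ r x) - b x‖ ≤ K * ‖Φ r x - x‖ := hLip.norm_sub_le _ _
      _ ≤ K * (C * |h|) := by
        gcongr
        exact (norm_flow_sub_le hbound hΦ0 hODE r x).trans <|
          mul_le_mul_of_nonneg_left (by simpa using abs_sub_left_of_mem_uIcc hr) hC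
      _ = K * C * |h| := by ring
  have hmvt := (convex_uIcc (0 : ℝ) h).norm_image_sub_le_of_norm_hasDerivWithin_le
    (fun r _ => (hderiv r).hasDerivWithinAt) hvelocity left_mem_uIcc right_mem_uIcc
  calc ‖Φ h x - (x + h • b x)‖ = ‖(Φ h x - h • b x) - (Φ 0 x - (0 : ℝ) • b x)‖ := by
        rw [hΦ0, zero_smul, sub_zero, sub_sub, add_comm (h • b x)]
    _ ≤ K * C * |h| * ‖h - 0‖ := hmvt
    _ = K * C * h ^ 2 := by rw [sub_zero, Real.norm_eq_abs, mul_assoc, abs_mul_abs_self, sq]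

theorem flow_add_apply {K : NNReal} (hLip : LipschitzWith K b) (hΦ0 : ∀ x, Φ 0 x = x)
    (hODE : ∀ t x, HasDerivAt (fun s => Φ s x) (b (Φ t x)) t) (t h : ℝ) (x : E) :
    Φ (t + h) x = Φ t (Φ h x) := by
  have hshift (s : ℝ) : HasDerivAt (fun s => Φ (s + h) x) (b (Φ (s + h) x)) s :=
    (hODE (s + h) x).comp_add_const s h
  have := ODE_solution_unique_univ (v := fun _ => b) (s := fun _ => univ) (t₀ := 0)
    (fun _ => hLip.lipschitzOnWith) (fun s => ⟨hshift s, trivial⟩)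
    (fun s => ⟨hODE s (Φ h x), trivial⟩) (by simp [hΦ0])
  exact congrFun this t

end

/-- **Quadratic closeness of `Φ t (x + h b(x))` and `Φ (t+h) x`.**
For a globally bounded Lipschitz vector field `b` with flow `Φ` and any fixed `t`,
`‖Φ t (x + h • b x) − Φ (t+h) x‖ ≤ Lip(Φ t) * Lip(b) * ‖b‖_∞ * h²` for all `x, h`. -/
theorem flow_shift_quadratic_estimate
    {d : ℕ} (b : (Fin d → ℝ) → (Fin d → ℝ)) (Φ : ℝ → (Fin d → ℝ) → (Fin d → ℝ))
    (K : NNReal) (hLip : LipschitzWith K b)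
    (C : ℝ) (hbound : ∀ x, ‖b x‖ ≤ C)
    (hΦ0 : ∀ x, Φ 0 x = x)
    (hODE : ∀ t x, HasDerivAt (fun s => Φ s x) (b (Φ t x)) t)
    (t : ℝ) (L : NNReal) (hLt : LipschitzWith L (Φ t)) :
    ∀ (x : Fin d → ℝ) (h : ℝ),
      ‖Φ t (x + h • b x) - Φ (t + h) x‖ ≤ (L : ℝ) * (K : ℝ) * C * h ^ 2 := by
  intro x h
  rw [flow_add_apply hLip hΦ0 hODE t h x]
  calc ‖Φ t (x + h • b x) - Φ t (Φ h x)‖ ≤ L * ‖(x + h • b x) - Φ h x‖ := hLt.norm_sub_le _ _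
    _ = L * ‖Φ h x - (x + h • b x)‖ := by rw [norm_sub_rev]
    _ ≤ L * (K * C * h ^ 2) := by
        gcongr; exact norm_flow_sub_add_smul_le hLip hbound hΦ0 hODE h x
    _ = L * K * C * h ^ 2 := by ring
end
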